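/- arXiv:2302.05324 — 2 statements merged into one kernel-verified Lean document; each statement's English description precedes it below -/
import Mathlib

section
/- Let μ̄ and μ̂ be probability distributions over a finite set X, and suppose R̄ maximizes ⟨μ̄, R⟩ over {R : ‖R‖₂ ≤ 1} and R̂ maximizes ⟨μ̂, R⟩ over {R : ‖R‖₂ ≤ 1}, where all reward functions take values in [R_min, R_max]. Then |⟨μ̄, R̂⟩ - ⟨μ̄, R̄⟩| ≤ 3 (R_max - R_min) · d_var(μ̄, μ̂). -/
open Finset

lemma tv_pair_bound {X : Type*} [Fintype X]
    (μbar μhat : X → ℝ)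
    (hμbar1 : ∑ x, μbar x = 1) (hμhat1 : ∑ x, μhat x = 1)
    (Rmin Rmax : ℝ) (R : X → ℝ)
    (hR : ∀ x, Rmin ≤ R x ∧ R x ≤ Rmax) :
    |∑ x, μbar x * R x - ∑ x, μhat x * R x| ≤
      (Rmax - Rmin) * ((1 / 2) * ∑ x, |μbar x - μhat x|) := by
  set c : ℝ := (Rmin + Rmax) / 2 with hc
  have key : ∑ x, μbar x * R x - ∑ x, μhat x * R x
      = ∑ x, (μbar x - μhat x) * (R x - c) := by
    have : ∑ x, (μbar x - μhat x) * (R x - c)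
        = (∑ x, μbar x * R x - ∑ x, μhat x * R x)
          - c * (∑ x, μbar x - ∑ x, μhat x) := by
      rw [← Finset.sum_sub_distrib, ← Finset.sum_sub_distrib, Finset.mul_sum,
        ← Finset.sum_sub_distrib]
      congr 1; ext x; ring
    rw [this, hμbar1, hμhat1]; ring
  rw [key]
  calc |∑ x, (μbar x - μhat x) * (R x - c)|
      ≤ ∑ x, |(μbar x - μhat x) * (R x - c)| := Finset.abs_sum_le_sum_abs _ _
    _ ≤ ∑ x, |μbar x - μhat x| * ((Rmax - Rmin) / 2) := by
        apply Finset.sum_le_sum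
        intro x _
        rw [abs_mul]
        apply mul_le_mul_of_nonneg_left _ (abs_nonneg _)
        rw [abs_le]
        constructor
        · have := (hR x).1; simp only [hc]; linarith
        · have := (hR x).2; simp only [hc]; linarith
    _ = (Rmax - Rmin) * ((1 / 2) * ∑ x, |μbar x - μhat x|) := by
        rw [← Finset.sum_mul]; ring

/-- If R̄ maximizes ⟨μ̄, ·⟩ and R̂ maximizes ⟨μ̂, ·⟩ over rewards valued in
[R_min, R_max] with Euclidean norm at most 1, then
|⟨μ̄, R̂⟩ - ⟨μ̄, R̄⟩| ≤ 3 (R_max - R_min) d_var(μ̄, μ̂). -/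
theorem value_gap_le_three_range_tv
    {X : Type*} [Fintype X]
    (μbar μhat : X → ℝ)
    (hμbar0 : ∀ x, 0 ≤ μbar x) (hμhat0 : ∀ x, 0 ≤ μhat x)
    (hμbar1 : ∑ x, μbar x = 1) (hμhat1 : ∑ x, μhat x = 1)
    (Rmin Rmax : ℝ) (Rbar Rhat : X → ℝ)
    (hRbarRange : ∀ x, Rmin ≤ Rbar x ∧ Rbar x ≤ Rmax)
    (hRhatRange : ∀ x, Rmin ≤ Rhat x ∧ Rhat x ≤ Rmax)
    (hRbarNorm : Real.sqrt (∑ x, (Rbar x) ^ 2) ≤ 1)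
    (hRhatNorm : Real.sqrt (∑ x, (Rhat x) ^ 2) ≤ 1)
    (hRbarOpt : ∀ R : X → ℝ, (∀ x, Rmin ≤ R x ∧ R x ≤ Rmax) →
      Real.sqrt (∑ x, (R x) ^ 2) ≤ 1 → ∑ x, μbar x * R x ≤ ∑ x, μbar x * Rbar x)
    (hRhatOpt : ∀ R : X → ℝ, (∀ x, Rmin ≤ R x ∧ R x ≤ Rmax) →
      Real.sqrt (∑ x, (R x) ^ 2) ≤ 1 → ∑ x, μhat x * R x ≤ ∑ x, μhat x * Rhat x) :
    |∑ x, μbar x * Rhat x - ∑ x, μbar x * Rbar x| ≤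
      3 * (Rmax - Rmin) * ((1 / 2) * ∑ x, |μbar x - μhat x|) := by
  -- X is nonempty
  have hne : Nonempty X := by
    by_contra h
    rw [not_nonempty_iff] at h
    simp [Finset.sum_eq_zero_iff] at hμbar1
  obtain ⟨x0⟩ := hne
  have hRR : Rmin ≤ Rmax := le_trans (hRbarRange x0).1 (hRbarRange x0).2
  have hd0 : 0 ≤ (1 / 2) * ∑ x, |μbar x - μhat x| := by
    apply mul_nonneg (by norm_num)
    exact Finset.sum_nonneg fun x _ => abs_nonneg _
  have h1 : ∑ x, μbar x * Rhat x ≤ ∑ x, μbar x * Rbar x :=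
    hRbarOpt Rhat hRhatRange hRhatNorm
  have h2 : ∑ x, μhat x * Rbar x ≤ ∑ x, μhat x * Rhat x :=
    hRhatOpt Rbar hRbarRange hRbarNorm
  have b1 := tv_pair_bound μbar μhat hμbar1 hμhat1 Rmin Rmax Rbar hRbarRange
  have b2 := tv_pair_bound μbar μhat hμbar1 hμhat1 Rmin Rmax Rhat hRhatRange
  rw [abs_sub_le_iff] at b1 b2 ⊢
  constructor
  · nlinarith
  · nlinarith [mul_nonneg (sub_nonneg.2 hRR) hd0]
end

section
/- If probability distributions P and Q over a finite set X satisfy d_H(P,Q)² ≤ ε, then for any reward R constrained to [R_min, R_max] and unit Euclidean norm, the value gap satisfies |⟨P, R̂⟩ − ⟨P, R̄⟩| ≤ 3√2 (R_max − R_min) √ε, where R̄ and R̂ are the constrained maximizers of ⟨P, ·⟩ and ⟨Q, ·⟩ respectively. -/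
open Finset

private lemma dvar_le {X : Type*} [Fintype X]
    (P Q : X → ℝ) (hP0 : ∀ x, 0 ≤ P x) (hQ0 : ∀ x, 0 ≤ Q x)
    (hP1 : ∑ x, P x = 1) (hQ1 : ∑ x, Q x = 1)
    (ε : ℝ) (hε : 0 ≤ ε)
    (hH : (1 / 2) * ∑ x, (Real.sqrt (P x) - Real.sqrt (Q x)) ^ 2 ≤ ε) :
    ∑ x, |P x - Q x| ≤ 2 * Real.sqrt (2 * ε) := by
  have habs : ∀ x, |P x - Q x| =
      |Real.sqrt (P x) - Real.sqrt (Q x)| * (Real.sqrt (P x) + Real.sqrt (Q x)) := by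
    intro x
    rw [← abs_of_nonneg (add_nonneg (Real.sqrt_nonneg (P x)) (Real.sqrt_nonneg (Q x))),
      ← abs_mul]
    congr 1
    have h1 := Real.sq_sqrt (hP0 x)
    have h2 := Real.sq_sqrt (hQ0 x)
    nlinarith
  have hCS : (∑ x, |P x - Q x|) ^ 2 ≤
      (∑ x, (Real.sqrt (P x) - Real.sqrt (Q x)) ^ 2) *
      (∑ x, (Real.sqrt (P x) + Real.sqrt (Q x)) ^ 2) := by
    calc (∑ x, |P x - Q x|) ^ 2
        = (∑ x, |Real.sqrt (P x) - Real.sqrt (Q x)| *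
            (Real.sqrt (P x) + Real.sqrt (Q x))) ^ 2 := by
          congr 1; exact Finset.sum_congr rfl fun x _ => habs x
      _ ≤ (∑ x, |Real.sqrt (P x) - Real.sqrt (Q x)| ^ 2) *
          (∑ x, (Real.sqrt (P x) + Real.sqrt (Q x)) ^ 2) :=
          Finset.sum_mul_sq_le_sq_mul_sq _ _ _
      _ = _ := by simp [sq_abs]
  have hsumPQ : ∑ x, Real.sqrt (P x) * Real.sqrt (Q x) ≤ 1 := by
    have h := Finset.sum_mul_sq_le_sq_mul_sq Finset.univ
      (fun x => Real.sqrt (P x)) (fun x => Real.sqrt (Q x))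
    simp only [Real.sq_sqrt (hP0 _), Real.sq_sqrt (hQ0 _)] at h
    rw [hP1, hQ1] at h
    have hnn : 0 ≤ ∑ x, Real.sqrt (P x) * Real.sqrt (Q x) :=
      Finset.sum_nonneg fun x _ => mul_nonneg (Real.sqrt_nonneg _) (Real.sqrt_nonneg _)
    nlinarith
  have hplus : ∑ x, (Real.sqrt (P x) + Real.sqrt (Q x)) ^ 2 ≤ 4 := by
    have : ∀ x, (Real.sqrt (P x) + Real.sqrt (Q x)) ^ 2 =
        P x + Q x + 2 * (Real.sqrt (P x) * Real.sqrt (Q x)) := by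
      intro x
      have h1 := Real.sq_sqrt (hP0 x)
      have h2 := Real.sq_sqrt (hQ0 x)
      nlinarith
    rw [Finset.sum_congr rfl fun x _ => this x]
    rw [Finset.sum_add_distrib, Finset.sum_add_distrib, ← Finset.mul_sum, hP1, hQ1]
    linarith
  have hminus : ∑ x, (Real.sqrt (P x) - Real.sqrt (Q x)) ^ 2 ≤ 2 * ε := by linarith
  have hminus0 : 0 ≤ ∑ x, (Real.sqrt (P x) - Real.sqrt (Q x)) ^ 2 :=
    Finset.sum_nonneg fun x _ => sq_nonneg _
  have hS0 : 0 ≤ ∑ x, |P x - Q x| := Finset.sum_nonneg fun x _ => abs_nonneg _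
  have hsq : (∑ x, |P x - Q x|) ^ 2 ≤ 8 * ε := by nlinarith
  have h2e : Real.sqrt (2 * ε) ^ 2 = 2 * ε := Real.sq_sqrt (by linarith)
  nlinarith [Real.sqrt_nonneg (2 * ε)]

private lemma pairing_le {X : Type*} [Fintype X]
    (P Q : X → ℝ) (hsum : ∑ x, P x = ∑ x, Q x)
    (Rmin Rmax : ℝ) (R : X → ℝ) (hR : ∀ x, Rmin ≤ R x ∧ R x ≤ Rmax) :
    ∑ x, P x * R x - ∑ x, Q x * R x ≤ (Rmax - Rmin) / 2 * ∑ x, |P x - Q x| := by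
  set c := (Rmin + Rmax) / 2 with hc
  have key : ∑ x, P x * R x - ∑ x, Q x * R x = ∑ x, (P x - Q x) * (R x - c) := by
    have : ∑ x, (P x - Q x) * (R x - c) =
        (∑ x, P x * R x - ∑ x, Q x * R x) - c * (∑ x, P x - ∑ x, Q x) := by
      rw [← Finset.sum_sub_distrib, ← Finset.sum_sub_distrib, Finset.mul_sum,
        ← Finset.sum_sub_distrib]
      exact Finset.sum_congr rfl fun x _ => by ring
    rw [this, hsum]; ring
  rw [key, Finset.mul_sum]
  apply Finset.sum_le_sum
  intro x _
  have h1 := (hR x).1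
  have h2 := (hR x).2
  have hRc : |R x - c| ≤ (Rmax - Rmin) / 2 := by
    rw [abs_le]; constructor <;> simp [hc] <;> linarith
  calc (P x - Q x) * (R x - c) ≤ |(P x - Q x) * (R x - c)| := le_abs_self _
    _ = |P x - Q x| * |R x - c| := abs_mul _ _
    _ ≤ |P x - Q x| * ((Rmax - Rmin) / 2) :=
        mul_le_mul_of_nonneg_left hRc (abs_nonneg _)
    _ = (Rmax - Rmin) / 2 * |P x - Q x| := by ring

/-- If d_H(P,Q)² ≤ ε, then for constrained maximizers R̄ of ⟨P, ·⟩ and R̂ of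
⟨Q, ·⟩ over rewards in [R_min, R_max] with unit-bounded Euclidean norm,
|⟨P, R̂⟩ − ⟨P, R̄⟩| ≤ 3√2 (R_max − R_min) √ε. -/
theorem value_gap_le_hellinger_bound
    {X : Type*} [Fintype X]
    (P Q : X → ℝ)
    (hP0 : ∀ x, 0 ≤ P x) (hQ0 : ∀ x, 0 ≤ Q x)
    (hP1 : ∑ x, P x = 1) (hQ1 : ∑ x, Q x = 1)
    (ε : ℝ) (hε : 0 ≤ ε)
    (hH : (1 / 2) * ∑ x, (Real.sqrt (P x) - Real.sqrt (Q x)) ^ 2 ≤ ε)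
    (Rmin Rmax : ℝ) (Rbar Rhat : X → ℝ)
    (hRbarRange : ∀ x, Rmin ≤ Rbar x ∧ Rbar x ≤ Rmax)
    (hRhatRange : ∀ x, Rmin ≤ Rhat x ∧ Rhat x ≤ Rmax)
    (hRbarNorm : Real.sqrt (∑ x, (Rbar x) ^ 2) ≤ 1)
    (hRhatNorm : Real.sqrt (∑ x, (Rhat x) ^ 2) ≤ 1)
    (hRbarOpt : ∀ R : X → ℝ, (∀ x, Rmin ≤ R x ∧ R x ≤ Rmax) →
      Real.sqrt (∑ x, (R x) ^ 2) ≤ 1 → ∑ x, P x * R x ≤ ∑ x, P x * Rbar x)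
    (hRhatOpt : ∀ R : X → ℝ, (∀ x, Rmin ≤ R x ∧ R x ≤ Rmax) →
      Real.sqrt (∑ x, (R x) ^ 2) ≤ 1 → ∑ x, Q x * R x ≤ ∑ x, Q x * Rhat x) :
    |∑ x, P x * Rhat x - ∑ x, P x * Rbar x| ≤
      3 * Real.sqrt 2 * (Rmax - Rmin) * Real.sqrt ε := by
  have hne : Nonempty X := by
    rcases isEmpty_or_nonempty X with h | h
    · rw [Finset.univ_eq_empty, Finset.sum_empty] at hP1; norm_num at hP1
    · exact h
  obtain ⟨x0⟩ := hne
  have hD : 0 ≤ Rmax - Rmin := by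
    have h1 := (hRbarRange x0).1; have h2 := (hRbarRange x0).2; linarith
  have hsum : ∑ x, P x = ∑ x, Q x := by rw [hP1, hQ1]
  have hS : ∑ x, |P x - Q x| ≤ 2 * Real.sqrt (2 * ε) :=
    dvar_le P Q hP0 hQ0 hP1 hQ1 ε hε hH
  have hle : ∑ x, P x * Rhat x ≤ ∑ x, P x * Rbar x :=
    hRbarOpt Rhat hRhatRange hRhatNorm
  have h1 : ∑ x, P x * Rbar x - ∑ x, Q x * Rbar x ≤
      (Rmax - Rmin) / 2 * ∑ x, |P x - Q x| :=
    pairing_le P Q hsum Rmin Rmax Rbar hRbarRange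
  have h2 : ∑ x, Q x * Rhat x - ∑ x, P x * Rhat x ≤
      (Rmax - Rmin) / 2 * ∑ x, |P x - Q x| := by
    have := pairing_le Q P hsum.symm Rmin Rmax Rhat hRhatRange
    simpa [abs_sub_comm] using this
  have h3 : ∑ x, Q x * Rbar x ≤ ∑ x, Q x * Rhat x :=
    hRhatOpt Rbar hRbarRange hRbarNorm
  have hbound : ∑ x, P x * Rbar x - ∑ x, P x * Rhat x ≤
      (Rmax - Rmin) * ∑ x, |P x - Q x| := by linarith
  have hsqrt : Real.sqrt (2 * ε) = Real.sqrt 2 * Real.sqrt ε :=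
    Real.sqrt_mul (by norm_num) ε
  have habs : |∑ x, P x * Rhat x - ∑ x, P x * Rbar x| =
      ∑ x, P x * Rbar x - ∑ x, P x * Rhat x := by
    rw [abs_sub_comm]; exact abs_of_nonneg (by linarith)
  rw [habs]
  have hfinal : (Rmax - Rmin) * ∑ x, |P x - Q x| ≤
      3 * Real.sqrt 2 * (Rmax - Rmin) * Real.sqrt ε := by
    have h5 : (Rmax - Rmin) * ∑ x, |P x - Q x| ≤
        (Rmax - Rmin) * (2 * Real.sqrt (2 * ε)) :=
      mul_le_mul_of_nonneg_left hS hD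
    rw [hsqrt] at h5
    nlinarith [Real.sqrt_nonneg (2:ℝ), Real.sqrt_nonneg ε,
      mul_nonneg (Real.sqrt_nonneg (2:ℝ)) (Real.sqrt_nonneg ε)]
  linarith
end
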